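/- (Main theorem, algebraic form) Let n ≥ 2 and let σ_1,…,σ_{n−1} be the standard Artin generators of B_n, and set Δ_n² = (σ_1⋯σ_{n−1})^n. Let a, b ∈ B_n and define H_i = a σ_i a⁻¹ and F_i = b σ_i b⁻¹ for 1 ≤ i ≤ n−1. Then for any indices i_1,…,i_{n(n−1)} and j_1,…,j_{n(n−1)} in {1,…,n−1} such that Δ_n² = F_{i_1}⋯F_{i_{n(n−1)}} = H_{j_1}⋯H_{j_{n(n−1)}} in B_n, the tuples (F_{i_1},…,F_{i_{n(n−1)}}) and (H_{j_1},…,H_{j_{n(n−1)}}) in (B_n)^{n(n−1)} are Hurwitz equivalent. -/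

import Mathlib

/-- The braid relators on generators indexed by `Fin n` (so this presents the
braid group on `n + 1` strands): `σᵢσⱼ = σⱼσᵢ` for `|i - j| > 1` and
`σᵢσᵢ₊₁σᵢ = σᵢ₊₁σᵢσᵢ₊₁`. -/
def braidRels (n : ℕ) : Set (FreeGroup (Fin n)) :=
  {r | ∃ i j : Fin n, i.val + 2 ≤ j.val ∧
        r = FreeGroup.of i * FreeGroup.of j * (FreeGroup.of j * FreeGroup.of i)⁻¹} ∪
  {r | ∃ i j : Fin n, i.val + 1 = j.val ∧
        r = FreeGroup.of i * FreeGroup.of j * FreeGroup.of i *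
            (FreeGroup.of j * FreeGroup.of i * FreeGroup.of j)⁻¹}

/-- The braid group with `n` Artin generators, i.e. the braid group `B_{n+1}`
on `n + 1` strands. -/
abbrev BraidGroup (n : ℕ) : Type := PresentedGroup (braidRels n)

/-- The Artin generators (zero-based: `σ 0, …, σ (n-1)` are the paper's
`σ₁, …, σₙ`). -/
def σ {n : ℕ} (i : Fin n) : BraidGroup n := PresentedGroup.of i

/-- A single Hurwitz move `R_k` (the position `k` is encoded by the prefix `u`):
`(…, a, b, …) ↦ (…, a b a⁻¹, a, …)`. -/
def HurwitzMove {G : Type*} [Group G] (l l' : List G) : Prop :=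
  ∃ (u v : List G) (a b : G),
    l = u ++ a :: b :: v ∧ l' = u ++ (a * b * a⁻¹) :: a :: v

/-- Hurwitz equivalence: finite sequences of Hurwitz moves and their inverses. -/
def HurwitzEquiv {G : Type*} [Group G] : List G → List G → Prop :=
  Relation.EqvGen HurwitzMove

/-- `Δₙ² = (σ₁ ⋯ σₙ₋₁)ⁿ`. -/
def DeltaSq (n : ℕ) : BraidGroup (n - 1) :=
  ((List.ofFn fun i : Fin (n - 1) => σ i).prod) ^ n

/-!
The two tuples are `conj b` and `conj a` applied to the `σ`-tuples `σ_u`, `σ_v` of the index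
words `u`, `v`. As `Δ²` is central, `σ_u` and `σ_v` are themselves factorizations of `Δ²`, so by
Garside's theorem (the positive braid monoid embeds in the braid group) `u` and `v` are related by
braid relations, each of which is realized by Hurwitz moves. It remains to see that conjugation by
`a⁻¹ b` preserves the Hurwitz class of `σ_u`, and it suffices to do so for each `σᵢ⁻¹`: since `σᵢ`
divides `Δ²` on both sides, `u` is positively equivalent to words `i U` and `U i`, and Hurwitz
moves slide the first entry of `(σᵢ, σᵢ⁻¹ σ_U σᵢ)` to the end, giving `(σ_U, σᵢ)`.

Garside's theorem is proved classically: the lcm property of two generators (Garside's lemma),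
shown by induction on word length and along the chain of elementary moves, gives left
cancellation in the positive monoid; localizing it at the central element `Δ²`, which every
generator divides, makes the generators invertible, so the localization map factors through the
braid group.
-/

section Hurwitz

variable {G H : Type*} [Group G] [Group H] {l l' l'' : List G}

lemma HurwitzMove.append_append (x y : List G) (h : HurwitzMove l l') :
    HurwitzMove (x ++ l ++ y) (x ++ l' ++ y) := by
  obtain ⟨u, v, a, b, rfl, rfl⟩ := h
  exact ⟨x ++ u, v ++ y, a, b, by simp, by simp⟩

lemma HurwitzMove.map {F : Type*} [FunLike F G H] [MonoidHomClass F G H] (f : F)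
    (h : HurwitzMove l l') : HurwitzMove (l.map f) (l'.map f) := by
  obtain ⟨u, v, a, b, rfl, rfl⟩ := h
  exact ⟨u.map f, v.map f, f a, f b, by simp, by simp⟩

namespace HurwitzEquiv

lemma refl (l : List G) : HurwitzEquiv l l := Relation.EqvGen.refl l

lemma symm (h : HurwitzEquiv l l') : HurwitzEquiv l' l := Relation.EqvGen.symm _ _ h

lemma trans (h : HurwitzEquiv l l') (h' : HurwitzEquiv l' l'') : HurwitzEquiv l l'' :=
  Relation.EqvGen.trans _ _ _ h h'

lemma of_move (h : HurwitzMove l l') : HurwitzEquiv l l' := Relation.EqvGen.rel _ _ h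

lemma lift {f : List G → List H} (hf : ∀ ⦃l l'⦄, HurwitzMove l l' → HurwitzMove (f l) (f l'))
    (h : HurwitzEquiv l l') : HurwitzEquiv (f l) (f l') := by
  induction h with
  | rel _ _ h => exact of_move (hf h)
  | refl => exact refl _
  | symm _ _ _ ih => exact ih.symm
  | trans _ _ _ _ _ ih ih' => exact ih.trans ih'

lemma append_append (x y : List G) (h : HurwitzEquiv l l') :
    HurwitzEquiv (x ++ l ++ y) (x ++ l' ++ y) :=
  h.lift fun _ _ => HurwitzMove.append_append x y

lemma cons (a : G) (h : HurwitzEquiv l l') : HurwitzEquiv (a :: l) (a :: l') := by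
  simpa using h.append_append [a] []

lemma map {F : Type*} [FunLike F G H] [MonoidHomClass F G H] (f : F) (h : HurwitzEquiv l l') :
    HurwitzEquiv (l.map f) (l'.map f) :=
  h.lift fun _ _ => HurwitzMove.map f

lemma of_commute {a b : G} (h : Commute a b) : HurwitzEquiv [a, b] [b, a] := by
  have hconj : a * b * a⁻¹ = b := by rw [h.eq, mul_inv_cancel_right]
  simpa [hconj] using of_move (⟨[], [], a, b, rfl, rfl⟩ : HurwitzMove [a, b] _)

lemma of_braid {a b : G} (h : a * b * a = b * a * b) : HurwitzEquiv [a, b, a] [b, a, b] := by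
  have hconj : a * (b * a * b⁻¹) * a⁻¹ = b := by
    rw [← mul_assoc, ← mul_assoc, h]; group
  have h₁ : HurwitzMove [a, b, a] [a, b * a * b⁻¹, b] := ⟨[a], [], b, a, rfl, rfl⟩
  have h₂ : HurwitzMove [a, b * a * b⁻¹, b] [a * (b * a * b⁻¹) * a⁻¹, a, b] :=
    ⟨[], [b], _, _, rfl, rfl⟩
  rw [hconj] at h₂
  exact (of_move h₁).trans (of_move h₂)

lemma append_singleton (T : List G) (c : G) :
    HurwitzEquiv (T ++ [c]) (c :: T.map (MulAut.conj c⁻¹)) := by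
  induction T with
  | nil => exact refl _
  | cons t T ih =>
    have hmove : HurwitzMove (c :: (c⁻¹ * t * c) :: T.map (MulAut.conj c⁻¹))
        ((c * (c⁻¹ * t * c) * c⁻¹) :: c :: T.map (MulAut.conj c⁻¹)) := ⟨[], _, _, _, rfl, rfl⟩
    rw [show c * (c⁻¹ * t * c) * c⁻¹ = t by group] at hmove
    rw [List.cons_append, List.map_cons, MulAut.conj_apply, inv_inv]
    exact (ih.cons t).trans (of_move hmove).symm

end HurwitzEquiv

lemma List.map_conj_map_conj (l : List G) (g h : G) :
    (l.map (MulAut.conj h)).map (MulAut.conj g) = l.map (MulAut.conj (g * h)) := by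
  rw [map_mul, List.map_map]; rfl

def hurwitzStabilizer (l : List G) : Subgroup G where
  carrier := {g | HurwitzEquiv (l.map (MulAut.conj g)) l}
  one_mem' := by simpa using HurwitzEquiv.refl l
  mul_mem' {g h} hg hh := by
    simpa [List.map_conj_map_conj] using (hh.map (MulAut.conj g)).trans hg
  inv_mem' {g} hg := by
    simpa [List.map_conj_map_conj] using hg.symm.map (MulAut.conj g⁻¹)

lemma hurwitzEquiv_map_conj_of_inv_mul_mem {a b : G} (h : a⁻¹ * b ∈ hurwitzStabilizer l) :
    HurwitzEquiv (l.map (MulAut.conj b)) (l.map (MulAut.conj a)) := by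
  rw [← mul_inv_cancel_left a b, ← List.map_conj_map_conj]
  exact h.map (MulAut.conj a)

end Hurwitz

section BraidFamily

variable {M : Type*} [Monoid M] {m : ℕ} {s : ℕ → M}

/-- Only `s 0, …, s (m - 1)` matter; indexing by `ℕ` spares bounds on `s (i + 1)`. -/
structure IsBraidFamily (m : ℕ) (s : ℕ → M) : Prop where
  commute : ∀ ⦃i j : ℕ⦄, i + 2 ≤ j → j < m → Commute (s i) (s j)
  braid : ∀ ⦃i : ℕ⦄, i + 2 ≤ m → s i * s (i + 1) * s i = s (i + 1) * s i * s (i + 1)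

def ascendingProd (s : ℕ → M) (k : ℕ) : M := ((List.range k).map s).prod

lemma ascendingProd_succ (s : ℕ → M) (k : ℕ) :
    ascendingProd s (k + 1) = ascendingProd s k * s k :=
  List.prod_range_succ s k

lemma dvd_ascendingProd (s : ℕ → M) {k : ℕ} (hk : 1 ≤ k) : s 0 ∣ ascendingProd s k := by
  induction k, hk using Nat.le_induction with
  | base => simp [ascendingProd]
  | succ k _ ih => exact (ascendingProd_succ s k ▸ ih.mul_right (s k))

namespace IsBraidFamily

lemma commute_ascendingProd (hs : IsBraidFamily m s) {j k : ℕ} (hk : k + 1 ≤ j) (hj : j < m) :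
    Commute (s j) (ascendingProd s k) := by
  induction k with
  | zero => exact Commute.one_right _
  | succ k ih =>
    rw [ascendingProd_succ]
    exact (ih (by omega)).mul_right (hs.commute (by omega) hj).symm

lemma ascendingProd_mul (hs : IsBraidFamily m s) {t k : ℕ} (ht : t + 2 ≤ k) (hk : k ≤ m) :
    ascendingProd s k * s t = s (t + 1) * ascendingProd s k := by
  induction k, ht using Nat.le_induction with
  | base =>
    have hP := hs.commute_ascendingProd (k := t) (j := t + 1) le_rfl (by omega)
    simp only [ascendingProd_succ, mul_assoc, hs.braid hk]
    rw [← mul_assoc, ← mul_assoc, ← hP.eq]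
    simp only [mul_assoc]
  | succ k hk' ih =>
    rw [ascendingProd_succ, mul_assoc, (hs.commute (by omega) (by omega)).symm.eq, ← mul_assoc,
      ih (by omega), mul_assoc]

lemma ascendingProd_sq_mul (hs : IsBraidFamily m s) {k : ℕ} (hk : k < m) :
    ascendingProd s (k + 1) ^ 2 * s k = s 0 * ascendingProd s (k + 1) ^ 2 := by
  induction k with
  | zero => simp [ascendingProd, sq, mul_assoc]
  | succ k ih =>
    set P := ascendingProd s k
    have hbP : s (k + 1) * P = P * s (k + 1) := (hs.commute_ascendingProd le_rfl hk).eq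
    have hbraid := hs.braid (i := k) (by omega)
    have key : ascendingProd s (k + 2) ^ 2 = ascendingProd s (k + 1) ^ 2 * s (k + 1) * s k := by
      calc ascendingProd s (k + 2) ^ 2 = P * s k * (s (k + 1) * P) * s k * s (k + 1) := by
            simp only [ascendingProd_succ, sq, P, mul_assoc]
        _ = P * s k * P * (s k * s (k + 1) * s k) := by rw [hbP, hbraid]; simp only [mul_assoc]
        _ = ascendingProd s (k + 1) ^ 2 * s (k + 1) * s k := by
            simp only [ascendingProd_succ, sq, P, mul_assoc]
    calc ascendingProd s (k + 2) ^ 2 * s (k + 1)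
        = ascendingProd s (k + 1) ^ 2 * (s (k + 1) * s k * s (k + 1)) := by
          rw [key]; simp only [mul_assoc]
      _ = (ascendingProd s (k + 1) ^ 2 * s k) * s (k + 1) * s k := by
          rw [← hbraid]; simp only [mul_assoc]
      _ = s 0 * ascendingProd s (k + 2) ^ 2 := by
          rw [ih (by omega), key]; simp only [mul_assoc]

lemma ascendingProd_pow_mul (hs : IsBraidFamily m s) {t j : ℕ} (h : t + j < m) :
    ascendingProd s m ^ j * s t = s (t + j) * ascendingProd s m ^ j := by
  induction j with
  | zero => simp
  | succ j ih =>
    rw [pow_succ', mul_assoc, ih (by omega), ← mul_assoc,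
      hs.ascendingProd_mul (by omega) le_rfl, mul_assoc, ← add_assoc]

lemma commute_ascendingProd_pow (hs : IsBraidFamily m s) {t : ℕ} (ht : t < m) :
    Commute (ascendingProd s m ^ (m + 1)) (s t) := by
  set c := ascendingProd s m
  have hsq : c ^ 2 * s (m - 1) = s 0 * c ^ 2 := by
    simpa [Nat.sub_add_cancel (show 1 ≤ m by omega)] using hs.ascendingProd_sq_mul (k := m - 1)
      (by omega)
  have hsplit : c ^ (m + 1) = c ^ t * c ^ 2 * c ^ (m - 1 - t) := by
    rw [← pow_add, ← pow_add]; congr 1; omega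
  have h₁ := hs.ascendingProd_pow_mul (t := t) (j := m - 1 - t) (by omega)
  have h₂ := hs.ascendingProd_pow_mul (t := 0) (j := t) (by omega)
  rw [show t + (m - 1 - t) = m - 1 by omega] at h₁
  rw [zero_add] at h₂
  show c ^ (m + 1) * s t = s t * c ^ (m + 1)
  rw [hsplit, mul_assoc, h₁, ← mul_assoc, mul_assoc (c ^ t), hsq, ← mul_assoc, h₂]
  simp only [mul_assoc, c]

lemma dvd_ascendingProd_pow (hs : IsBraidFamily m s) {t : ℕ} (ht : t < m) :
    s t ∣ ascendingProd s m ^ (m + 1) := by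
  set c := ascendingProd s m
  have hsplit : c ^ (m + 1) = c ^ t * c * c ^ (m - t) := by
    rw [← pow_succ, ← pow_add]; congr 1; omega
  have h := hs.ascendingProd_pow_mul (t := 0) (j := t) (by omega)
  rw [zero_add] at h
  rw [hsplit]
  refine Dvd.dvd.mul_right ?_ _
  calc s t ∣ s t * c ^ t := dvd_mul_right _ _
    _ = c ^ t * s 0 := h.symm
    _ ∣ c ^ t * c := mul_dvd_mul_left _ (dvd_ascendingProd s (by omega))

end IsBraidFamily

lemma extend_val_apply {N : Type*} [One N] (f : Fin m → N) {k : ℕ} (hk : k < m) :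
    Function.extend Fin.val f 1 k = f ⟨k, hk⟩ :=
  Fin.val_injective.extend_apply f 1 ⟨k, hk⟩

lemma IsBraidFamily.of_fin {f : Fin m → M}
    (hcomm : ∀ ⦃i j : Fin m⦄, i.val + 2 ≤ j.val → Commute (f i) (f j))
    (hbraid : ∀ ⦃i j : Fin m⦄, i.val + 1 = j.val → f i * f j * f i = f j * f i * f j) :
    IsBraidFamily m (Function.extend Fin.val f 1) where
  commute i j hij hj := by
    rw [extend_val_apply f (by omega), extend_val_apply f hj]
    exact hcomm (i := ⟨i, by omega⟩) (j := ⟨j, hj⟩) hij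
  braid i hi := by
    rw [extend_val_apply f (by omega), extend_val_apply f (by omega)]
    exact hbraid (i := ⟨i, by omega⟩) (j := ⟨i + 1, by omega⟩) rfl

lemma prod_ofFn_eq_ascendingProd (f : Fin m → M) :
    (List.ofFn f).prod = ascendingProd (Function.extend Fin.val f 1) m := by
  rw [ascendingProd, ← List.map_coe_finRange_eq_range, List.map_map, List.ofFn_eq_map]
  congr 2
  exact funext fun i => (Fin.val_injective.extend_apply f 1 i).symm

end BraidFamily

namespace OreLocalization

variable {R : Type*} [Monoid R]

abbrev oreSetOfLeCenter (S : Submonoid R) (hS : S ≤ Submonoid.center R) : OreSet S where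
  ore_right_cancel r₁ r₂ s h := ⟨s, by
    rwa [← Submonoid.mem_center_iff.1 (hS s.2), ← Submonoid.mem_center_iff.1 (hS s.2)]⟩
  oreNum r _ := r
  oreDenom _ s := s
  ore_eq r s := (Submonoid.mem_center_iff.1 (hS s.2) r).symm

lemma numeratorHom_injective [IsLeftCancelMul R] {S : Submonoid R} [OreSet S] :
    Function.Injective (numeratorHom : R →* OreLocalization S R) := by
  intro x y h
  obtain ⟨u, v, huv, hu⟩ := oreDiv_eq_iff.1 h
  simp only [OneMemClass.coe_one, mul_one] at hu
  rw [Submonoid.smul_def, hu] at huv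
  exact (mul_left_cancel huv).symm

lemma isUnit_numeratorHom {S : Submonoid R} [OreSet S] {x y : R} (hxy : x * y ∈ S)
    (hyx : y * x ∈ S) : IsUnit (numeratorHom x : OreLocalization S R) := by
  have h₁ := numerator_isUnit (S := S) ⟨_, hxy⟩
  have h₂ := numerator_isUnit (S := S) ⟨_, hyx⟩
  simp only [map_mul] at h₁ h₂
  refine isUnit_iff_exists_and_exists.2
    ⟨⟨(numeratorHom y : OreLocalization S R) * ↑h₁.unit⁻¹, ?_⟩,
      ⟨↑h₂.unit⁻¹ * (numeratorHom y : OreLocalization S R), ?_⟩⟩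
  · rw [← mul_assoc]; exact h₁.mul_val_inv
  · rw [mul_assoc]; exact h₂.val_inv_mul

end OreLocalization

namespace BraidWord

variable {m : ℕ}

inductive Rel : List (Fin m) → List (Fin m) → Prop
  | comm {i j : Fin m} : i.val + 2 ≤ j.val → Rel [i, j] [j, i]
  | braid {i j : Fin m} : i.val + 1 = j.val → Rel [i, j, i] [j, i, j]

def Step (u v : List (Fin m)) : Prop :=
  ∃ x y p q, (Rel p q ∨ Rel q p) ∧ u = x ++ p ++ y ∧ v = x ++ q ++ y

/-- Equality of positive braids. -/
def PosEquiv : List (Fin m) → List (Fin m) → Prop := Relation.ReflTransGen Step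

infix:50 " ≋ " => PosEquiv

variable {u v w x : List (Fin m)}

lemma Rel.length_eq {p q : List (Fin m)} (h : Rel p q) : p.length = q.length := by
  cases h <;> rfl

lemma Step.symm (h : Step u v) : Step v u := by
  obtain ⟨x, y, p, q, hpq, rfl, rfl⟩ := h
  exact ⟨x, y, q, p, hpq.symm, rfl, rfl⟩

lemma Step.length_eq (h : Step u v) : u.length = v.length := by
  obtain ⟨x, y, p, q, hpq | hpq, rfl, rfl⟩ := h <;> simp [hpq.length_eq]

lemma Step.append_append (x y : List (Fin m)) (h : Step u v) :
    Step (x ++ u ++ y) (x ++ v ++ y) := by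
  obtain ⟨x', y', p, q, hpq, rfl, rfl⟩ := h
  exact ⟨x ++ x', y' ++ y, p, q, hpq, by simp, by simp⟩

namespace PosEquiv

@[refl, simp] lemma refl (u : List (Fin m)) : u ≋ u := Relation.ReflTransGen.refl

lemma trans (h : u ≋ v) (h' : v ≋ w) : u ≋ w := Relation.ReflTransGen.trans h h'

instance : Trans (PosEquiv (m := m)) PosEquiv PosEquiv := ⟨trans⟩

lemma symm (h : u ≋ v) : v ≋ u := by
  induction h with
  | refl => rfl
  | tail _ hs ih => exact (Relation.ReflTransGen.single hs.symm).trans ih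

lemma length_eq (h : u ≋ v) : u.length = v.length := by
  induction h with
  | refl => rfl
  | tail _ hs ih => exact ih.trans hs.length_eq

lemma append_append (x y : List (Fin m)) (h : u ≋ v) : x ++ u ++ y ≋ x ++ v ++ y := by
  induction h with
  | refl => rfl
  | tail _ hs ih => exact ih.tail (hs.append_append x y)

lemma append_left (x : List (Fin m)) (h : u ≋ v) : x ++ u ≋ x ++ v := by
  simpa using h.append_append x []

lemma append_right (y : List (Fin m)) (h : u ≋ v) : u ++ y ≋ v ++ y := by
  simpa using h.append_append [] y

lemma cons (a : Fin m) (h : u ≋ v) : a :: u ≋ a :: v := h.append_left [a]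

lemma append (h : u ≋ v) (h' : w ≋ x) : u ++ w ≋ v ++ x :=
  (h.append_right w).trans (h'.append_left v)

lemma of_rel {p q : List (Fin m)} (h : Rel p q) (y : List (Fin m)) : p ++ y ≋ q ++ y :=
  Relation.ReflTransGen.single ⟨[], y, p, q, Or.inl h, rfl, rfl⟩

end PosEquiv

def Far (a b : Fin m) : Prop := a.val + 2 ≤ b.val ∨ b.val + 2 ≤ a.val

def Adj (a b : Fin m) : Prop := a.val + 1 = b.val ∨ b.val + 1 = a.val

instance : DecidableRel (Adj (m := m)) := fun _ _ => inferInstanceAs (Decidable (_ ∨ _))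

lemma Far.symm {a b : Fin m} (h : Far a b) : Far b a := Or.symm h

lemma Adj.symm {a b : Fin m} (h : Adj a b) : Adj b a := Or.symm h

lemma Adj.ne {a b : Fin m} (h : Adj a b) : a ≠ b := by
  rintro rfl; rcases h with h | h <;> omega

lemma Far.not_adj {a b : Fin m} (h : Far a b) : ¬ Adj a b := by
  rcases h with h | h <;> rintro (h' | h') <;> omega

lemma eq_or_adj_or_far (a b : Fin m) : a = b ∨ Adj a b ∨ Far a b := by
  unfold Adj Far; omega

lemma PosEquiv.swap {a b : Fin m} (h : Far a b) (y : List (Fin m)) :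
    a :: b :: y ≋ b :: a :: y := by
  rcases h with h | h
  · exact PosEquiv.of_rel (.comm h) y
  · exact (PosEquiv.of_rel (.comm h) y).symm

lemma PosEquiv.braid {a b : Fin m} (h : Adj a b) (y : List (Fin m)) :
    a :: b :: a :: y ≋ b :: a :: b :: y := by
  rcases h with h | h
  · exact PosEquiv.of_rel (.braid h) y
  · exact (PosEquiv.of_rel (.braid h) y).symm

lemma PosEquiv.swap_word {c : Fin m} (h : ∀ a ∈ u, Far c a) (y : List (Fin m)) :
    c :: (u ++ y) ≋ u ++ c :: y := by
  induction u with
  | nil => rfl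
  | cons a u ih =>
    calc c :: a :: (u ++ y) ≋ a :: c :: (u ++ y) := .swap (h a (by simp)) _
      _ ≋ a :: (u ++ c :: y) := (ih fun b hb => h b (by simp [hb])).cons a

/-- The generators `a` and `b` have the least common multiple `a :: complement a b`. -/
def complement (a b : Fin m) : List (Fin m) :=
  if a = b then [] else if Adj a b then [b, a] else [b]

@[simp] lemma complement_self (a : Fin m) : complement a a = [] := by simp [complement]

lemma complement_of_adj {a b : Fin m} (h : Adj a b) : complement a b = [b, a] := by
  simp [complement, h, h.ne]

lemma complement_of_far {a b : Fin m} (h : Far a b) : complement a b = [b] := by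
  have hne : a ≠ b := by rintro rfl; rcases h with h | h <;> omega
  simp [complement, h.not_adj, hne]

lemma mem_complement {a b c : Fin m} (h : c ∈ complement a b) : c = a ∨ c = b := by
  unfold complement at h; split_ifs at h <;> simp at h <;> tauto

/-- The relation `a :: u ≋ b :: v` factors through the least common multiple of `a` and `b`. -/
def LcmFactor (a b : Fin m) (u v : List (Fin m)) : Prop :=
  ∃ w, u ≋ complement a b ++ w ∧ v ≋ complement b a ++ w

lemma LcmFactor.congr {a b : Fin m} {u' v' : List (Fin m)} (h : LcmFactor a b u v)
    (hu : u' ≋ u) (hv : v' ≋ v) : LcmFactor a b u' v' :=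
  let ⟨w, h₁, h₂⟩ := h; ⟨w, hu.trans h₁, hv.trans h₂⟩

lemma LcmFactor.cons_far {a b c : Fin m} (h : LcmFactor a b u v) (ha : Far c a) (hb : Far c b) :
    LcmFactor a b (c :: u) (c :: v) := by
  obtain ⟨w, h₁, h₂⟩ := h
  have hfar : ∀ {a b : Fin m}, Far c a → Far c b → ∀ d ∈ complement a b, Far c d := by
    intro a b ha hb d hd
    rcases mem_complement hd with rfl | rfl <;> assumption
  exact ⟨c :: w, (h₁.cons c).trans (.swap_word (hfar ha hb) w),
    (h₂.cons c).trans (.swap_word (hfar hb ha) w)⟩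

/-- Garside's lemma for words shorter than `L`. -/
def LcmBelow (m L : ℕ) : Prop :=
  ∀ ⦃a b : Fin m⦄ ⦃u v : List (Fin m)⦄, u.length < L → a :: u ≋ b :: v → LcmFactor a b u v

namespace LcmBelow

variable {L : ℕ} {a b : Fin m}

lemma cancel (H : LcmBelow m L) (hu : u.length < L) (h : a :: u ≋ a :: v) : u ≋ v := by
  obtain ⟨w, h₁, h₂⟩ := H hu h
  simp only [complement_self, List.nil_append] at h₁ h₂
  exact h₁.trans h₂.symm

lemma far (H : LcmBelow m L) (hab : Far a b) (hu : u.length < L) (h : a :: u ≋ b :: v) :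
    ∃ w, u ≋ b :: w ∧ v ≋ a :: w := by
  simpa [LcmFactor, complement_of_far hab, complement_of_far hab.symm] using H hu h

lemma adj (H : LcmBelow m L) (hab : Adj a b) (hu : u.length < L) (h : a :: u ≋ b :: v) :
    ∃ w, u ≋ b :: a :: w ∧ v ≋ a :: b :: w := by
  simpa [LcmFactor, complement_of_adj hab, complement_of_adj hab.symm] using H hu h

end LcmBelow

section FarHead

variable {a b c : Fin m} {y : List (Fin m)}

lemma lcmFactor_far_head_of_adj_adj (H : LcmBelow m (y.length + 1)) (hac : Far a c)
    (hab : Adj a b) (hbc : Adj b c) (h₁ : a :: y ≋ b :: c :: w) (h₂ : v ≋ c :: b :: w) :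
    LcmFactor a b (c :: y) v := by
  have l₁ := h₁.length_eq
  obtain ⟨w₂, hC₁, hC₂⟩ := H.adj hab (by omega) h₁
  have l₂ := hC₁.length_eq
  simp only [List.length_cons] at l₁ l₂
  obtain ⟨w₃, hD₁, hD₂⟩ := H.far hac.symm (by omega) hC₂
  obtain ⟨w₄, hE₁, hE₂⟩ := H.adj hbc (by omega) hD₂
  refine ⟨c :: b :: a :: w₄, ?_, ?_⟩ <;> simp only [complement_of_adj hab,
    complement_of_adj hab.symm, List.cons_append, List.nil_append]
  · calc c :: y ≋ c :: b :: a :: w₂ := hC₁.cons c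
      _ ≋ c :: b :: a :: c :: b :: w₄ := hE₁.append_left [c, b, a]
      _ ≋ c :: b :: c :: a :: b :: w₄ := (PosEquiv.swap hac _).append_left [c, b]
      _ ≋ b :: c :: b :: a :: b :: w₄ := .braid hbc.symm _
      _ ≋ b :: c :: a :: b :: a :: w₄ := (PosEquiv.braid hab.symm _).append_left [b, c]
      _ ≋ b :: a :: c :: b :: a :: w₄ := (PosEquiv.swap hac.symm _).cons b
  · calc v ≋ c :: b :: w := h₂
      _ ≋ c :: b :: a :: w₃ := hD₁.append_left [c, b]
      _ ≋ c :: b :: a :: b :: c :: w₄ := hE₂.append_left [c, b, a]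
      _ ≋ c :: a :: b :: a :: c :: w₄ := (PosEquiv.braid hab.symm _).cons c
      _ ≋ a :: c :: b :: a :: c :: w₄ := .swap hac.symm _
      _ ≋ a :: c :: b :: c :: a :: w₄ := (PosEquiv.swap hac _).append_left [a, c, b]
      _ ≋ a :: b :: c :: b :: a :: w₄ := (PosEquiv.braid hbc.symm _).cons a

lemma lcmFactor_far_head_of_far_adj (H : LcmBelow m (y.length + 1)) (hac : Far a c)
    (hab : Far a b) (hbc : Adj b c) (h₁ : a :: y ≋ b :: c :: w) (h₂ : v ≋ c :: b :: w) :
    LcmFactor a b (c :: y) v := by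
  have l₁ := h₁.length_eq
  simp only [List.length_cons] at l₁
  obtain ⟨w₂, hC₁, hC₂⟩ := H.far hab (by omega) h₁
  obtain ⟨w₃, hD₁, hD₂⟩ := H.far hac.symm (by omega) hC₂
  refine ⟨c :: b :: w₃, ?_, ?_⟩ <;> simp only [complement_of_far hab,
    complement_of_far hab.symm, List.cons_append, List.nil_append]
  · calc c :: y ≋ c :: b :: w₂ := hC₁.cons c
      _ ≋ c :: b :: c :: w₃ := hD₂.append_left [c, b]
      _ ≋ b :: c :: b :: w₃ := .braid hbc.symm _
  · calc v ≋ c :: b :: w := h₂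
      _ ≋ c :: b :: a :: w₃ := hD₁.append_left [c, b]
      _ ≋ c :: a :: b :: w₃ := (PosEquiv.swap hab.symm _).cons c
      _ ≋ a :: c :: b :: w₃ := .swap hac.symm _

/-- The inductive step of Garside's lemma when the first move swaps far generators. -/
lemma LcmBelow.lcmFactor_far_head (H : LcmBelow m (y.length + 1)) (hac : Far a c)
    (h : LcmFactor c b (a :: y) v) : LcmFactor a b (c :: y) v := by
  obtain ⟨w, h₁, h₂⟩ := h
  rcases eq_or_adj_or_far b c with rfl | hbc | hbc
  · simp only [complement_self, List.nil_append] at h₁ h₂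
    refine ⟨y, ?_, ?_⟩ <;> simp only [complement_of_far hac, complement_of_far hac.symm,
      List.singleton_append]
    exacts [.refl _, h₂.trans h₁.symm]
  · simp only [complement_of_adj hbc, complement_of_adj hbc.symm, List.cons_append,
      List.nil_append] at h₁ h₂
    rcases eq_or_adj_or_far a b with rfl | hab | hab
    · exact absurd hbc hac.not_adj
    · exact lcmFactor_far_head_of_adj_adj H hac hab hbc h₁ h₂
    · exact lcmFactor_far_head_of_far_adj H hac hab hbc h₁ h₂
  · simp only [complement_of_far hbc, complement_of_far hbc.symm, List.cons_append,
      List.nil_append] at h₁ h₂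
    have hab := H (by simp) h₁
    exact (hab.cons_far hac.symm hbc.symm).congr (.refl _) h₂

end FarHead

section BraidHead

variable {a b c : Fin m} {y : List (Fin m)}

lemma lcmFactor_braid_head_of_far_adj (H : LcmBelow m (y.length + 2)) (hac : Adj a c)
    (hab : Far a b) (hbc : Adj b c) (h₁ : a :: c :: y ≋ b :: c :: w) (h₂ : v ≋ c :: b :: w) :
    LcmFactor a b (c :: a :: y) v := by
  obtain ⟨w₂, hC₁, hC₂⟩ := H.far hab (by simp) h₁
  have l₁ := h₁.length_eq
  have l₂ := hC₁.length_eq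
  simp only [List.length_cons] at l₁ l₂
  obtain ⟨w₃, hD₁, hD₂⟩ := H.adj hac.symm (by omega) hC₂
  obtain ⟨w₄, hE₁, hE₂⟩ := H.adj hbc.symm (by omega) hC₁
  have l₃ := hD₂.length_eq
  simp only [List.length_cons] at l₃
  have hF := H.cancel (by simp; omega) (hD₂.symm.trans hE₂)
  obtain ⟨w₅, hF₁, hF₂⟩ := H.far hab (by omega) hF
  refine ⟨c :: b :: a :: c :: w₅, ?_, ?_⟩ <;> simp only [complement_of_far hab,
    complement_of_far hab.symm, List.cons_append, List.nil_append]
  · calc c :: a :: y ≋ c :: a :: b :: c :: w₄ := hE₁.append_left [c, a]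
      _ ≋ c :: a :: b :: c :: a :: w₅ := hF₂.append_left [c, a, b, c]
      _ ≋ c :: b :: a :: c :: a :: w₅ := (PosEquiv.swap hab _).cons c
      _ ≋ c :: b :: c :: a :: c :: w₅ := (PosEquiv.braid hac _).append_left [c, b]
      _ ≋ b :: c :: b :: a :: c :: w₅ := .braid hbc.symm _
  · calc v ≋ c :: b :: w := h₂
      _ ≋ c :: b :: a :: c :: w₃ := hD₁.append_left [c, b]
      _ ≋ c :: b :: a :: c :: b :: w₅ := hF₁.append_left [c, b, a, c]
      _ ≋ c :: a :: b :: c :: b :: w₅ := (PosEquiv.swap hab.symm _).cons c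
      _ ≋ c :: a :: c :: b :: c :: w₅ := (PosEquiv.braid hbc _).append_left [c, a]
      _ ≋ a :: c :: a :: b :: c :: w₅ := .braid hac.symm _
      _ ≋ a :: c :: b :: a :: c :: w₅ := (PosEquiv.swap hab _).append_left [a, c]

lemma lcmFactor_braid_head_of_adj_far (H : LcmBelow m (y.length + 2)) (hac : Adj a c)
    (hab : Adj a b) (hbc : Far b c) (h₁ : a :: c :: y ≋ b :: w) (h₂ : v ≋ c :: w) :
    LcmFactor a b (c :: a :: y) v := by
  obtain ⟨w₂, hC₁, hC₂⟩ := H.adj hab (by simp) h₁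
  obtain ⟨w₃, hD₁, hD₂⟩ := H.far hbc.symm (by omega) hC₁
  have l₁ := hC₁.length_eq
  simp only [List.length_cons] at l₁
  obtain ⟨w₄, hE₁, hE₂⟩ := H.adj hac (by omega) hD₂
  refine ⟨c :: a :: b :: w₄, ?_, ?_⟩ <;> simp only [complement_of_adj hab,
    complement_of_adj hab.symm, List.cons_append, List.nil_append]
  · calc c :: a :: y ≋ c :: a :: b :: w₃ := hD₁.append_left [c, a]
      _ ≋ c :: a :: b :: a :: c :: w₄ := hE₂.append_left [c, a, b]
      _ ≋ c :: b :: a :: b :: c :: w₄ := (PosEquiv.braid hab _).cons c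
      _ ≋ b :: c :: a :: b :: c :: w₄ := .swap hbc.symm _
      _ ≋ b :: c :: a :: c :: b :: w₄ := (PosEquiv.swap hbc _).append_left [b, c, a]
      _ ≋ b :: a :: c :: a :: b :: w₄ := (PosEquiv.braid hac.symm _).cons b
  · calc v ≋ c :: w := h₂
      _ ≋ c :: a :: b :: w₂ := hC₂.cons c
      _ ≋ c :: a :: b :: c :: a :: w₄ := hE₁.append_left [c, a, b]
      _ ≋ c :: a :: c :: b :: a :: w₄ := (PosEquiv.swap hbc _).append_left [c, a]
      _ ≋ a :: c :: a :: b :: a :: w₄ := .braid hac.symm _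
      _ ≋ a :: c :: b :: a :: b :: w₄ := (PosEquiv.braid hab _).append_left [a, c]
      _ ≋ a :: b :: c :: a :: b :: w₄ := (PosEquiv.swap hbc.symm _).cons a

lemma lcmFactor_braid_head_of_far_far (H : LcmBelow m (y.length + 2)) (hac : Adj a c)
    (hab : Far a b) (hbc : Far b c) (h₁ : a :: c :: y ≋ b :: w) (h₂ : v ≋ c :: w) :
    LcmFactor a b (c :: a :: y) v := by
  obtain ⟨w₂, hC₁, hC₂⟩ := H.far hab (by simp) h₁
  obtain ⟨w₃, hD₁, hD₂⟩ := H.far hbc.symm (by omega) hC₁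
  refine ⟨c :: a :: w₃, ?_, ?_⟩ <;> simp only [complement_of_far hab,
    complement_of_far hab.symm, List.cons_append, List.nil_append]
  · calc c :: a :: y ≋ c :: a :: b :: w₃ := hD₁.append_left [c, a]
      _ ≋ c :: b :: a :: w₃ := (PosEquiv.swap hab _).cons c
      _ ≋ b :: c :: a :: w₃ := .swap hbc.symm _
  · calc v ≋ c :: w := h₂
      _ ≋ c :: a :: w₂ := hC₂.cons c
      _ ≋ c :: a :: c :: w₃ := hD₂.append_left [c, a]
      _ ≋ a :: c :: a :: w₃ := .braid hac.symm _

end BraidHead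

/-- The inductive step of Garside's lemma when the first move is a braid relation. -/
lemma LcmBelow.lcmFactor_braid_head {a b c : Fin m} {y : List (Fin m)}
    (H : LcmBelow m (y.length + 2)) (hac : Adj a c) (h : LcmFactor c b (a :: c :: y) v) :
    LcmFactor a b (c :: a :: y) v := by
  obtain ⟨w, h₁, h₂⟩ := h
  rcases eq_or_adj_or_far b c with rfl | hbc | hbc
  · simp only [complement_self, List.nil_append] at h₁ h₂
    refine ⟨y, ?_, ?_⟩ <;> simp only [complement_of_adj hac, complement_of_adj hac.symm,
      List.cons_append, List.nil_append]
    exacts [.refl _, h₂.trans h₁.symm]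
  · simp only [complement_of_adj hbc, complement_of_adj hbc.symm, List.cons_append,
      List.nil_append] at h₁ h₂
    rcases eq_or_adj_or_far a b with rfl | hab | hab
    · have hy := H.cancel (by simp) (H.cancel (by simp) h₁)
      exact ⟨c :: a :: y, by simp, by simpa using h₂.trans ((hy.symm.cons a).cons c)⟩
    · exfalso; unfold Adj at hab hbc hac; omega
    · exact lcmFactor_braid_head_of_far_adj H hac hab hbc h₁ h₂
  · simp only [complement_of_far hbc, complement_of_far hbc.symm, List.cons_append,
      List.nil_append] at h₁ h₂
    rcases eq_or_adj_or_far a b with rfl | hab | hab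
    · exact absurd hac hbc.not_adj
    · exact lcmFactor_braid_head_of_adj_far H hac hab hbc h₁ h₂
    · exact lcmFactor_braid_head_of_far_far H hac hab hbc h₁ h₂

lemma Step.cons_cases {a : Fin m} (h : Step (a :: u) w) :
    (∃ u', w = a :: u' ∧ Step u u') ∨
    (∃ c y, u = c :: y ∧ Far a c ∧ w = c :: a :: y) ∨
    (∃ c y, u = c :: a :: y ∧ Adj a c ∧ w = c :: a :: c :: y) := by
  obtain ⟨_ | ⟨x₀, x⟩, y, p, q, hpq, hu, rfl⟩ := h
  · rcases hpq with (⟨hij⟩ | ⟨hij⟩) | (⟨hij⟩ | ⟨hij⟩) <;>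
      simp only [List.nil_append, List.cons_append, List.cons.injEq] at hu <;>
      obtain ⟨rfl, rfl⟩ := hu
    exacts [Or.inr (Or.inl ⟨_, _, rfl, .inl hij, rfl⟩), Or.inr (Or.inr ⟨_, _, rfl, .inl hij, rfl⟩),
      Or.inr (Or.inl ⟨_, _, rfl, .inr hij, rfl⟩), Or.inr (Or.inr ⟨_, _, rfl, .inr hij, rfl⟩)]
  · simp only [List.cons_append, List.cons.injEq] at hu
    obtain ⟨rfl, rfl⟩ := hu
    exact Or.inl ⟨_, rfl, x, y, p, q, hpq, rfl, rfl⟩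

lemma LcmBelow.mono {L L' : ℕ} (H : LcmBelow m L) (h : L' ≤ L) : LcmBelow m L' :=
  fun _ _ _ _ hu => H (by omega)

lemma LcmBelow.succ {L : ℕ} (H : LcmBelow m L) : LcmBelow m (L + 1) := by
  intro a b u v hle h
  obtain hlt | hu := Nat.lt_succ_iff_lt_or_eq.1 hle
  · exact H hlt h
  -- Induct along the chain of moves from `a :: u`, according to where the first move acts.
  obtain ⟨w, hw, hwv⟩ : ∃ w, w = a :: u ∧ w ≋ b :: v := ⟨_, rfl, h⟩
  clear h hle
  induction hwv using Relation.ReflTransGen.head_induction_on generalizing a u with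
  | refl =>
    obtain ⟨rfl, rfl⟩ := List.cons.inj hw
    exact ⟨v, by simp, by simp⟩
  | head hs _ ih =>
    subst hw
    rcases hs.cons_cases with ⟨u', rfl, hu'⟩ | ⟨c, y, rfl, hac, rfl⟩ | ⟨c, y, rfl, hac, rfl⟩
    · exact (ih (hu'.length_eq ▸ hu) rfl).congr (.single hu') (.refl _)
    · simp only [List.length_cons] at hu ih
      exact (H.mono hu.le).lcmFactor_far_head hac (ih hu rfl)
    · simp only [List.length_cons] at hu ih
      exact (H.mono hu.le).lcmFactor_braid_head hac (ih hu rfl)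

/-- Garside's lemma. -/
lemma lcmBelow (L : ℕ) : LcmBelow m L := by
  induction L with
  | zero => intro _ _ _ _ hu; simp at hu
  | succ L ih => exact ih.succ

lemma PosEquiv.cancel_left (x : List (Fin m)) (h : x ++ u ≋ x ++ v) : u ≋ v := by
  induction x with
  | nil => simpa using h
  | cons a x ih => exact ih ((lcmBelow _).cancel (Nat.lt_succ_self _) h)

end BraidWord

lemma σ_commute {m : ℕ} {i j : Fin m} (h : i.val + 2 ≤ j.val) : Commute (σ i) (σ j) := by
  have := PresentedGroup.mk_eq_mk_of_mul_inv_mem (rels := braidRels m) (Or.inl ⟨i, j, h, rfl⟩)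
  simp only [map_mul] at this
  exact this

lemma σ_braid {m : ℕ} {i j : Fin m} (h : i.val + 1 = j.val) :
    σ i * σ j * σ i = σ j * σ i * σ j := by
  have := PresentedGroup.mk_eq_mk_of_mul_inv_mem (rels := braidRels m) (Or.inr ⟨i, j, h, rfl⟩)
  simp only [map_mul] at this
  exact this

namespace BraidWord

variable {m : ℕ} {u v : List (Fin m)}

lemma PosEquiv.prod_map_σ_eq (h : u ≋ v) : (u.map σ).prod = (v.map σ).prod := by
  induction h with
  | refl => rfl
  | tail _ hs ih =>
    obtain ⟨x, y, p, q, hpq, rfl, rfl⟩ := hs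
    have hrel : ∀ {p q : List (Fin m)}, Rel p q → (p.map σ).prod = (q.map σ).prod := by
      rintro _ _ (⟨h⟩ | ⟨h⟩)
      · simpa using (σ_commute h).eq
      · simpa [mul_assoc] using σ_braid h
    rw [ih]
    rcases hpq with h | h <;> simp [hrel h]

lemma PosEquiv.hurwitzEquiv (h : u ≋ v) : HurwitzEquiv (u.map σ) (v.map σ) := by
  induction h with
  | refl => exact .refl _
  | tail _ hs ih =>
    obtain ⟨x, y, p, q, hpq, rfl, rfl⟩ := hs
    have hrel : ∀ {p q : List (Fin m)}, Rel p q → HurwitzEquiv (p.map σ) (q.map σ) := by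
      rintro _ _ (⟨h⟩ | ⟨h⟩)
      exacts [.of_commute (σ_commute h), .of_braid (σ_braid h)]
    refine ih.trans ?_
    simp only [List.map_append]
    rcases hpq with h | h
    exacts [(hrel h).append_append _ _, (hrel h).symm.append_append _ _]

variable (m) in
def con : Con (FreeMonoid (Fin m)) where
  r u v := u.toList ≋ v.toList
  iseqv := ⟨fun _ => .refl _, PosEquiv.symm, PosEquiv.trans⟩
  mul' h h' := by simpa only [FreeMonoid.toList_mul] using h.append h'

end BraidWord

abbrev BraidMonoid (m : ℕ) : Type := (BraidWord.con m).Quotient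

namespace BraidMonoid

open BraidWord

variable {m : ℕ}

def mk (u : List (Fin m)) : BraidMonoid m := (FreeMonoid.ofList u : FreeMonoid (Fin m))

def of (i : Fin m) : BraidMonoid m := mk [i]

lemma mk_eq_mk {u v : List (Fin m)} : mk u = mk v ↔ u ≋ v := (con m).eq

lemma mk_append (u v : List (Fin m)) : mk (u ++ v) = mk u * mk v := rfl

lemma mk_surjective : Function.Surjective (mk : List (Fin m) → BraidMonoid m) := by
  rintro ⟨x⟩
  exact ⟨x.toList, rfl⟩

lemma mk_eq_prod (u : List (Fin m)) : mk u = (u.map of).prod := by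
  induction u with
  | nil => rfl
  | cons a u ih => rw [List.map_cons, List.prod_cons, ← ih]; exact mk_append [a] u

instance : IsLeftCancelMul (BraidMonoid m) where
  mul_left_cancel x y z h := by
    obtain ⟨u, rfl⟩ := mk_surjective x
    obtain ⟨v, rfl⟩ := mk_surjective y
    obtain ⟨w, rfl⟩ := mk_surjective z
    have h' : mk (u ++ v) = mk (u ++ w) := h
    exact mk_eq_mk.2 ((mk_eq_mk.1 h').cancel_left u)

lemma of_commute {i j : Fin m} (h : i.val + 2 ≤ j.val) : Commute (of i) (of j) :=
  mk_eq_mk.2 (.of_rel (.comm h) [])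

lemma of_braid {i j : Fin m} (h : i.val + 1 = j.val) : of i * of j * of i = of j * of i * of j :=
  mk_eq_mk.2 (.of_rel (.braid h) [])

lemma isBraidFamily : IsBraidFamily m (Function.extend Fin.val (of (m := m)) 1) :=
  .of_fin (fun _ _ => of_commute) (fun _ _ => of_braid)

variable (m) in
def deltaSq : BraidMonoid m := (List.ofFn (of (m := m))).prod ^ (m + 1)

lemma commute_deltaSq_of (i : Fin m) : Commute (deltaSq m) (of i) := by
  have := isBraidFamily.commute_ascendingProd_pow i.isLt
  rwa [extend_val_apply _ i.isLt, ← prod_ofFn_eq_ascendingProd] at this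

lemma of_dvd_deltaSq (i : Fin m) : of i ∣ deltaSq m := by
  have := isBraidFamily.dvd_ascendingProd_pow i.isLt
  rwa [extend_val_apply _ i.isLt, ← prod_ofFn_eq_ascendingProd] at this

lemma deltaSq_mem_center : deltaSq m ∈ Submonoid.center (BraidMonoid m) := by
  refine Submonoid.mem_center_iff.2 fun g => ?_
  obtain ⟨u, rfl⟩ := mk_surjective g
  rw [mk_eq_prod]
  refine (Commute.list_prod_left _ _ fun x hx => ?_).eq
  obtain ⟨i, -, rfl⟩ := List.mem_map.1 hx
  exact (commute_deltaSq_of i).symm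

lemma mul_of_eq_deltaSq {i : Fin m} {y : BraidMonoid m} (h : of i * y = deltaSq m) :
    y * of i = deltaSq m :=
  mul_left_cancel (a := of i) (by rw [← mul_assoc, h, (commute_deltaSq_of i).eq])

def toBraidGroup : BraidMonoid m →* BraidGroup m :=
  (con m).lift (FreeMonoid.lift σ) fun _ _ h => by
    rw [Con.ker_rel, FreeMonoid.lift_apply, FreeMonoid.lift_apply]
    exact h.prod_map_σ_eq

lemma toBraidGroup_mk (u : List (Fin m)) : toBraidGroup (mk u) = (u.map σ).prod := by
  simp [toBraidGroup, mk]

lemma toBraidGroup_of (i : Fin m) : toBraidGroup (of i) = σ i := by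
  simp [of, toBraidGroup_mk]

noncomputable def toUnits {N : Type*} [Monoid N] (f : BraidMonoid m →* N)
    (hf : ∀ i, IsUnit (f (of i))) : BraidGroup m →* Nˣ :=
  PresentedGroup.toGroup (f := fun i => (hf i).unit) <| by
    rintro _ (⟨i, j, h, rfl⟩ | ⟨i, j, h, rfl⟩) <;>
      simp only [map_mul, map_inv, FreeGroup.lift_apply_of, mul_inv_eq_one] <;> ext <;>
      simp only [Units.val_mul, IsUnit.unit_spec, ← map_mul]
    exacts [congrArg f (of_commute h).eq, congrArg f (of_braid h)]

lemma toUnits_toBraidGroup {N : Type*} [Monoid N] (f : BraidMonoid m →* N)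
    (hf : ∀ i, IsUnit (f (of i))) (x : BraidMonoid m) :
    (toUnits f hf (toBraidGroup x) : N) = f x := by
  obtain ⟨u, rfl⟩ := mk_surjective x
  rw [toBraidGroup_mk, mk_eq_prod]
  induction u with
  | nil => simp
  | cons a u ih =>
    simp only [List.map_cons, List.prod_cons, map_mul, Units.val_mul, ih]
    congr 1
    exact congrArg Units.val (PresentedGroup.toGroup.of _)

/-- Garside's theorem. -/
theorem toBraidGroup_injective : Function.Injective (toBraidGroup (m := m)) := by
  let S := Submonoid.powers (deltaSq m)
  let _ := OreLocalization.oreSetOfLeCenter S (Submonoid.powers_le.2 deltaSq_mem_center)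
  have hunit (i : Fin m) : IsUnit (OreLocalization.numeratorHom (S := S) (of i)) := by
    obtain ⟨y, hy⟩ := of_dvd_deltaSq i
    exact OreLocalization.isUnit_numeratorHom (by rw [← hy]; exact Submonoid.mem_powers _)
      (by rw [mul_of_eq_deltaSq hy.symm]; exact Submonoid.mem_powers _)
  intro x y h
  apply OreLocalization.numeratorHom_injective (S := S)
  rw [← toUnits_toBraidGroup _ hunit x, h, toUnits_toBraidGroup]

lemma toBraidGroup_deltaSq :
    toBraidGroup (deltaSq m) = (List.ofFn (σ (n := m))).prod ^ (m + 1) := by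
  simp [deltaSq, map_list_prod, List.map_ofFn, Function.comp_def, toBraidGroup_of]

lemma toBraidGroup_deltaSq_mem_center :
    toBraidGroup (deltaSq m) ∈ Subgroup.center (BraidGroup m) :=
  Subgroup.mem_center_iff.2 fun g => PresentedGroup.generated_by _
    (Subgroup.centralizer {toBraidGroup (deltaSq m)})
    (fun i => Subgroup.mem_centralizer_singleton_iff.2 <| by
      have := ((commute_deltaSq_of i).map toBraidGroup).symm.eq
      rwa [toBraidGroup_of] at this)
    g |> Subgroup.mem_centralizer_singleton_iff.1

lemma conj_eq_toBraidGroup_deltaSq_iff (g y : BraidGroup m) :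
    MulAut.conj g y = toBraidGroup (deltaSq m) ↔ y = toBraidGroup (deltaSq m) := by
  have hfix : MulAut.conj g (toBraidGroup (deltaSq m)) = toBraidGroup (deltaSq m) := by
    rw [MulAut.conj_apply, Subgroup.mem_center_iff.1 toBraidGroup_deltaSq_mem_center g,
      mul_inv_cancel_right]
  nth_rewrite 1 [← hfix]
  exact (MulAut.conj g).injective.eq_iff

end BraidMonoid

namespace BraidWord

open BraidMonoid

variable {m : ℕ} {u v : List (Fin m)}

lemma PosEquiv.of_prod_map_σ_eq (h : (u.map σ).prod = (v.map σ).prod) : u ≋ v :=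
  mk_eq_mk.1 <| toBraidGroup_injective <| by rwa [toBraidGroup_mk, toBraidGroup_mk]

lemma inv_σ_mem_hurwitzStabilizer (hu : (u.map σ).prod = toBraidGroup (deltaSq m)) (i : Fin m) :
    (σ i)⁻¹ ∈ hurwitzStabilizer (u.map σ) := by
  have hΔ : mk u = deltaSq m := toBraidGroup_injective (by rwa [toBraidGroup_mk])
  obtain ⟨y, hy⟩ := of_dvd_deltaSq i
  obtain ⟨U, rfl⟩ := mk_surjective y
  have hleft : u ≋ i :: U := mk_eq_mk.1 (hΔ.trans hy)
  have hright : U ++ [i] ≋ u := mk_eq_mk.1 ((mul_of_eq_deltaSq hy.symm).trans hΔ.symm)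
  have h₁ : HurwitzEquiv ((u.map σ).map (MulAut.conj (σ i)⁻¹))
      (σ i :: (U.map σ).map (MulAut.conj (σ i)⁻¹)) := by
    simpa using hleft.hurwitzEquiv.map (MulAut.conj (σ i)⁻¹)
  have h₂ : HurwitzEquiv (σ i :: (U.map σ).map (MulAut.conj (σ i)⁻¹)) ((U ++ [i]).map σ) := by
    simpa using (HurwitzEquiv.append_singleton (U.map σ) (σ i)).symm
  exact (h₁.trans h₂).trans hright.hurwitzEquiv

lemma hurwitzStabilizer_eq_top (hu : (u.map σ).prod = toBraidGroup (deltaSq m)) :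
    hurwitzStabilizer (u.map σ) = ⊤ :=
  eq_top_iff.2 fun g _ => PresentedGroup.generated_by _ _
    (fun i => inv_mem_iff.1 (inv_σ_mem_hurwitzStabilizer hu i)) g

end BraidWord

theorem hurwitz_equiv_frame_factorizations_general {n : ℕ}
    (a b : BraidGroup (n - 1))
    (i j : Fin (n * (n - 1)) → Fin (n - 1))
    (hF : (List.ofFn fun k => b * σ (i k) * b⁻¹).prod = DeltaSq n)
    (hH : (List.ofFn fun k => a * σ (j k) * a⁻¹).prod = DeltaSq n) :
    HurwitzEquiv (List.ofFn fun k => b * σ (i k) * b⁻¹)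
      (List.ofFn fun k => a * σ (j k) * a⁻¹) := by
  have hΔ : DeltaSq n = BraidMonoid.toBraidGroup (BraidMonoid.deltaSq (n - 1)) := by
    -- `n - 1 + 1 = n` fails only for `n = 0`, where both sides are `1`.
    rcases Nat.eq_zero_or_pos n with rfl | hn
    · simp [DeltaSq, BraidMonoid.toBraidGroup_deltaSq]
    · rw [BraidMonoid.toBraidGroup_deltaSq, Nat.sub_add_cancel hn, DeltaSq]
  have hconj (g : BraidGroup (n - 1)) (x : Fin (n * (n - 1)) → Fin (n - 1)) :
      (List.ofFn fun k => g * σ (x k) * g⁻¹) = ((List.ofFn x).map σ).map (MulAut.conj g) := by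
    simp [List.map_ofFn, Function.comp_def]
  rw [hconj, ← map_list_prod, hΔ, BraidMonoid.conj_eq_toBraidGroup_deltaSq_iff] at hF hH
  rw [hconj, hconj]
  refine (hurwitzEquiv_map_conj_of_inv_mul_mem ?_).trans
    ((BraidWord.PosEquiv.of_prod_map_σ_eq (hF.trans hH.symm)).hurwitzEquiv.map _)
  rw [BraidWord.hurwitzStabilizer_eq_top hF]
  exact Subgroup.mem_top _

/-- (Main theorem) Let `Hᵢ = a σᵢ a⁻¹` and `Fᵢ = b σᵢ b⁻¹` be two conjugate
frames of `Bₙ`. Any two factorizations of `Δₙ²` into elements of these frames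
are Hurwitz equivalent. -/
theorem hurwitz_equiv_frame_factorizations {n : ℕ} (hn : 2 ≤ n)
    (a b : BraidGroup (n - 1))
    (i j : Fin (n * (n - 1)) → Fin (n - 1))
    (hF : (List.ofFn fun k => b * σ (i k) * b⁻¹).prod = DeltaSq n)
    (hH : (List.ofFn fun k => a * σ (j k) * a⁻¹).prod = DeltaSq n) :
    HurwitzEquiv (List.ofFn fun k => b * σ (i k) * b⁻¹)
      (List.ofFn fun k => a * σ (j k) * a⁻¹) :=
  hurwitz_equiv_frame_factorizations_general a b i j hF hH
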